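/- arXiv:2306.05334 — 2 statements merged into one kernel-verified Lean document; each statement's English description precedes it below -/
import Mathlib

section
/- Let G be one of the graphs K6 minus an edge, the complement of C7, C5 joined with the complement of K2, or K_{3,1,3}-hat, let T be a triangle of G, and let G' be obtained from G by deleting the three edges of T and adding a new vertex adjacent exactly to the three vertices of T. Then G' has a spanning subgraph isomorphic to one of: K6 minus an edge, the complement of C7, C5 joined with complement of K2, K_{3,1,3}-hat, Q3, or V8. -/
/-!
The `(Δ,Y)`-operation commutes with graph isomorphisms and depends only on the vertex set of
the triangle, so it suffices to treat one triangle in each orbit of the automorphism group.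
There are two orbits in `K₆⁻` (triangles through an end of the missing edge, and the others)
and one in each of the other graphs: rotations act transitively on the triangles `{k, k+2, k+4}`
of `C₇ᶜ`; rotations of `C₅` together with the swap of the two apices act transitively on those
of `C₅ + K₂ᶜ`; and the swaps `1 ↔ 2`, `5 ↔ 6` act transitively on the four triangles `{a, 3, c}`
of `K_{3,1̂,3}`. For each representative an explicit bijection exhibits a spanning `K_{3,1̂,3}`,
`V₈`, `Q₃` or `V₈` respectively.
-/

namespace TwwPaper

open Finset

/-! ### Twin-width via contraction (partition-merge) sequences -/

/-- Two parts `P`, `Q` are *pure* (homogeneous) in `G`: the graph is either complete or empty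
between them.  In the trigraph of a partition, a non-pure pair of parts is joined by a red edge. -/
def Pure {V : Type*} (G : SimpleGraph V) (P Q : Finset V) : Prop :=
  (∀ x ∈ P, ∀ y ∈ Q, G.Adj x y) ∨ (∀ x ∈ P, ∀ y ∈ Q, ¬ G.Adj x y)

/-- The red degree of a part `P` in the partition `PP`: the number of other parts that are
not pure with respect to `P`. -/
noncomputable def redDeg {V : Type*} (G : SimpleGraph V) (PP : Finset (Finset V)) (P : Finset V) : ℕ :=
  {Q | Q ∈ PP ∧ Q ≠ P ∧ ¬ Pure G P Q}.ncard

/-- `QQ` is obtained from `PP` by merging (contracting) two parts. -/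
def Merge {V : Type*} [DecidableEq V] (PP QQ : Finset (Finset V)) : Prop :=
  ∃ A ∈ PP, ∃ B ∈ PP, A ≠ B ∧ QQ = insert (A ∪ B) ((PP.erase A).erase B)

/-- One contraction step keeping every red degree at most `d`. -/
def Step {V : Type*} [DecidableEq V] (G : SimpleGraph V) (d : ℕ) (PP QQ : Finset (Finset V)) :
    Prop :=
  Merge PP QQ ∧ ∀ P ∈ QQ, redDeg G QQ P ≤ d

/-- `G` admits a `d`-contraction sequence: starting from the partition into singletons one can
merge two parts at a time, always keeping all red degrees at most `d`, until one part remains. -/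
def TwwLE {V : Type*} [Fintype V] [DecidableEq V] (G : SimpleGraph V) (d : ℕ) : Prop :=
  Relation.ReflTransGen (Step G d)
    (Finset.univ.image fun v => ({v} : Finset V)) {Finset.univ}

/-- The twin-width of a finite simple graph. -/
noncomputable def tww {V : Type*} [Fintype V] [DecidableEq V] (G : SimpleGraph V) : ℕ :=
  sInf {d | TwwLE G d}

/-! ### Minors, separators, subgraph containment -/

/-- `H` is a minor of `G`: there is a minor model, i.e. pairwise disjoint nonempty connected
branch sets, one for each vertex of `H`, with an edge of `G` between the branch sets of any two
adjacent vertices of `H`. -/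
def IsMinor {α β : Type*} (H : SimpleGraph α) (G : SimpleGraph β) : Prop :=
  ∃ f : α → Set β,
    (∀ a, (f a).Nonempty) ∧
    (∀ a, (G.induce (f a)).Connected) ∧
    (∀ a b, a ≠ b → Disjoint (f a) (f b)) ∧
    ∀ a b, H.Adj a b → ∃ x ∈ f a, ∃ y ∈ f b, G.Adj x y

/-- `S` is a separator of `G` : deleting `S` leaves a nonempty disconnected graph. -/
def Sep {α : Type*} (G : SimpleGraph α) (S : Set α) : Prop :=
  (Sᶜ : Set α).Nonempty ∧ ¬ (G.induce Sᶜ).Preconnected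

/-- `G` contains `F` as a (not necessarily induced) subgraph. -/
def ContainsSubgraph {α β : Type*} (G : SimpleGraph β) (F : SimpleGraph α) : Prop :=
  ∃ f : α → β, Function.Injective f ∧ ∀ a b, F.Adj a b → G.Adj (f a) (f b)

/-- `G` is internally 4-connected. -/
def Internally4Connected {α : Type*} [Fintype α] (G : SimpleGraph α) : Prop :=
  5 ≤ Fintype.card α ∧
  (∀ S : Set α, S.ncard < 3 → ¬ Sep G S) ∧
  ∀ S : Set α, S.ncard = 3 → Sep G S →
    (∀ a ∈ S, ∀ b ∈ S, ¬ G.Adj a b) ∧ ∃ v ∉ S, G.neighborSet v = S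

/-! ### The concrete graphs -/

/-- `K₆` minus one edge. -/
def K6minus : SimpleGraph (Fin 6) where
  Adj a b := a ≠ b ∧ ¬(({a, b} : Finset (Fin 6)) = {0, 1})
  symm := by
    constructor
    rintro a b ⟨h1, h2⟩
    exact ⟨h1.symm, by rwa [Finset.pair_comm]⟩
  loopless := ⟨fun a h => h.1 rfl⟩

/-- The complement of the 7-cycle. -/
def C7c : SimpleGraph (Fin 7) := (SimpleGraph.cycleGraph 7)ᶜ

/-- Join of two graphs. -/
def joinG {α β : Type*} (G : SimpleGraph α) (H : SimpleGraph β) : SimpleGraph (α ⊕ β) where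
  Adj x y :=
    match x, y with
    | Sum.inl a, Sum.inl b => G.Adj a b
    | Sum.inr a, Sum.inr b => H.Adj a b
    | _, _ => True
  symm := by
    constructor
    rintro (a | a) (b | b) h
    · exact G.adj_symm h
    · exact trivial
    · exact trivial
    · exact H.adj_symm h
  loopless := by
    constructor
    rintro (a | a) h
    · exact G.irrefl h
    · exact H.irrefl h

/-- The join of `C₅` with the complement of `K₂` (two isolated vertices). -/
def C5K2c : SimpleGraph (Fin 5 ⊕ Fin 2) :=
  joinG (SimpleGraph.cycleGraph 5) (⊥ : SimpleGraph (Fin 2))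

/-- The part of a vertex of `K_{3,1,3}`: `{0,1,2}`, `{3}`, `{4,5,6}`. -/
def triPart : Fin 7 → ℕ := fun a => if a.val < 3 then 0 else if a.val = 3 then 1 else 2

/-- `K_{3,1̂,3}`: the complete tripartite graph `K_{3,1,3}` minus one edge from the middle
vertex `3` to each of the two size-3 parts (the edges `{0,3}` and `{3,4}`). -/
def K313hat : SimpleGraph (Fin 7) where
  Adj a b := triPart a ≠ triPart b ∧ ¬(({a, b} : Finset (Fin 7)) = {0, 3}) ∧
    ¬(({a, b} : Finset (Fin 7)) = {3, 4})
  symm := by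
    constructor
    rintro a b ⟨h1, h2, h3⟩
    refine ⟨h1.symm, ?_, ?_⟩ <;> rwa [Finset.pair_comm]
  loopless := ⟨fun a h => h.1 rfl⟩

/-- The cube graph `Q₃`. -/
def Q3 : SimpleGraph (Fin 2 × Fin 2 × Fin 2) where
  Adj x y := (x.1 ≠ y.1 ∧ x.2 = y.2) ∨ (x.1 = y.1 ∧ x.2.1 ≠ y.2.1 ∧ x.2.2 = y.2.2) ∨
    (x.1 = y.1 ∧ x.2.1 = y.2.1 ∧ x.2.2 ≠ y.2.2)
  symm := by
    constructor
    rintro x y (⟨h1, h2⟩ | ⟨h1, h2, h3⟩ | ⟨h1, h2, h3⟩)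
    · exact Or.inl ⟨h1.symm, h2.symm⟩
    · exact Or.inr (Or.inl ⟨h1.symm, h2.symm, h3.symm⟩)
    · exact Or.inr (Or.inr ⟨h1.symm, h2.symm, h3.symm⟩)
  loopless := by
    constructor
    rintro x (⟨h, -⟩ | ⟨-, h, -⟩ | ⟨-, -, h⟩) <;> exact h rfl

/-- The Wagner graph `V₈`: the 8-cycle plus the four main diagonals. -/
def V8 : SimpleGraph (Fin 8) where
  Adj a b := a ≠ b ∧ (b = a + 1 ∨ a = b + 1 ∨ b = a + 4)
  symm := by
    constructor
    rintro a b ⟨h, h1 | h1 | h1⟩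
    · exact ⟨h.symm, Or.inr (Or.inl h1)⟩
    · exact ⟨h.symm, Or.inl h1⟩
    · refine ⟨h.symm, Or.inr (Or.inr ?_)⟩
      subst h1
      have h4 : (4 : Fin 8) + 4 = 0 := by decide
      rw [add_assoc, h4, add_zero]
  loopless := by constructor; rintro a ⟨h, -⟩; exact h rfl

/-- `K₆` minus a perfect matching (`K₆^≡`), i.e. the octahedron `K_{2,2,2}`. -/
def K6mm3 : SimpleGraph (Fin 6) where
  Adj a b := a.val % 3 ≠ b.val % 3
  symm := ⟨fun _ _ h => h.symm⟩
  loopless := ⟨fun _ h => h rfl⟩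

/-- `K₆` minus a matching of size two (`K₆^=`). -/
def K6mm2 : SimpleGraph (Fin 6) where
  Adj a b := a ≠ b ∧ ¬(({a, b} : Finset (Fin 6)) = {0, 3}) ∧
    ¬(({a, b} : Finset (Fin 6)) = {1, 4})
  symm := by
    constructor
    rintro a b ⟨h1, h2, h3⟩
    refine ⟨h1.symm, ?_, ?_⟩ <;> rwa [Finset.pair_comm]
  loopless := ⟨fun a h => h.1 rfl⟩

/-- The join of the complement of `C₆` with a single vertex. -/
def C6cK1 : SimpleGraph (Fin 6 ⊕ Fin 1) :=
  joinG ((SimpleGraph.cycleGraph 6)ᶜ) (⊥ : SimpleGraph (Fin 1))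

/-- A perfect matching graph on `Fin m` (`m` even): `2i` is matched to `2i+1`. -/
def matchingGraph (m : ℕ) : SimpleGraph (Fin m) where
  Adj a b := a ≠ b ∧ a.val / 2 = b.val / 2
  symm := ⟨fun _ _ h => ⟨h.1.symm, h.2.symm⟩⟩
  loopless := ⟨fun _ h => h.1 rfl⟩

/-- The `m × n` grid graph. -/
def gridGraph (m n : ℕ) : SimpleGraph (Fin m × Fin n) where
  Adj p q := (p.1 = q.1 ∧ (p.2.val + 1 = q.2.val ∨ q.2.val + 1 = p.2.val)) ∨
    (p.2 = q.2 ∧ (p.1.val + 1 = q.1.val ∨ q.1.val + 1 = p.1.val))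
  symm := by
    constructor
    rintro p q (⟨h1, h2⟩ | ⟨h1, h2⟩)
    · exact Or.inl ⟨h1.symm, h2.symm⟩
    · exact Or.inr ⟨h1.symm, h2.symm⟩
  loopless := by constructor; rintro p (⟨-, h | h⟩ | ⟨-, h | h⟩) <;> omega

/-! ### `(Δ,Y)`-operation -/

/-- The `(Δ,Y)`-operation on the triangle `{x,y,z}` of `G`: delete the edges of the triangle
and add a new vertex (`none`) adjacent exactly to `x`, `y`, `z`. -/
def deltaY {α : Type*} (G : SimpleGraph α) (x y z : α) : SimpleGraph (Option α) where
  Adj a b :=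
    match a, b with
    | some a, some b => G.Adj a b ∧ ¬((a = x ∨ a = y ∨ a = z) ∧ (b = x ∨ b = y ∨ b = z))
    | some a, none => a = x ∨ a = y ∨ a = z
    | none, some b => b = x ∨ b = y ∨ b = z
    | none, none => False
  symm := by
    constructor
    rintro (_ | a) (_ | b) h
    · exact h.elim
    · exact h
    · exact h
    · exact ⟨h.1.symm, fun hc => h.2 ⟨hc.2, hc.1⟩⟩
  loopless := by
    constructor
    rintro (_ | a) h
    · exact h
    · exact G.irrefl h.1

/-- `G` has a spanning subgraph isomorphic to a member of
`𝓕₃ = {K₆⁻, C₇ᶜ, C₅ + K₂ᶜ, K_{3,1̂,3}, Q₃, V₈}`. -/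
def HasSpanningF3 {α : Type*} (G : SimpleGraph α) : Prop :=
  ∃ H : SimpleGraph α, H ≤ G ∧
    (Nonempty (H ≃g K6minus) ∨ Nonempty (H ≃g C7c) ∨ Nonempty (H ≃g C5K2c) ∨
      Nonempty (H ≃g K313hat) ∨ Nonempty (H ≃g Q3) ∨ Nonempty (H ≃g V8))

/-- `G` has a minor in `𝓕₃`. -/
def HasF3Minor {α : Type*} (G : SimpleGraph α) : Prop :=
  IsMinor K6minus G ∨ IsMinor C7c G ∨ IsMinor C5K2c G ∨ IsMinor K313hat G ∨
    IsMinor Q3 G ∨ IsMinor V8 G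

/-! ### Subdivisions -/

/-- Vertices of the subdivision of `G` in which the edge `ab` (with `a < b`) receives
`ℓ a b` internal (subdivision) vertices: the original vertices plus, for each oriented edge,
`ℓ a b` new vertices. -/
def SubdivVert {α : Type*} [LT α] (G : SimpleGraph α) (ℓ : α → α → ℕ) : Type _ :=
  α ⊕ Σ e : {p : α × α // p.1 < p.2 ∧ G.Adj p.1 p.2}, Fin (ℓ e.1.1 e.1.2)

noncomputable instance SubdivVert.instFintype {α : Type*} [LT α] [Fintype α]
    (G : SimpleGraph α) (ℓ : α → α → ℕ) : Fintype (SubdivVert G ℓ) := by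
  classical
  unfold SubdivVert
  infer_instance

noncomputable instance SubdivVert.instDecidableEq {α : Type*} [LT α] [DecidableEq α]
    (G : SimpleGraph α) (ℓ : α → α → ℕ) : DecidableEq (SubdivVert G ℓ) := by
  classical
  unfold SubdivVert
  infer_instance

/-- The subdivision of `G` in which each edge `ab` (`a < b`) is replaced by a path with
`ℓ a b` internal vertices (so of length `ℓ a b + 1`); an edge with `ℓ a b = 0` stays an edge. -/
def Subdiv {α : Type*} [LT α] (G : SimpleGraph α) (ℓ : α → α → ℕ) :
    SimpleGraph (SubdivVert G ℓ) where
  Adj x y :=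
    match x, y with
    | Sum.inl a, Sum.inl b =>
        G.Adj a b ∧ ((a < b ∧ ℓ a b = 0) ∨ (b < a ∧ ℓ b a = 0))
    | Sum.inl a, Sum.inr ei =>
        (a = ei.1.1.1 ∧ (ei.2 : ℕ) = 0) ∨ (a = ei.1.1.2 ∧ (ei.2 : ℕ) + 1 = ℓ ei.1.1.1 ei.1.1.2)
    | Sum.inr ei, Sum.inl a =>
        (a = ei.1.1.1 ∧ (ei.2 : ℕ) = 0) ∨ (a = ei.1.1.2 ∧ (ei.2 : ℕ) + 1 = ℓ ei.1.1.1 ei.1.1.2)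
    | Sum.inr ei, Sum.inr ej =>
        ei.1 = ej.1 ∧ ((ei.2 : ℕ) + 1 = (ej.2 : ℕ) ∨ (ej.2 : ℕ) + 1 = (ei.2 : ℕ))
  symm := by
    constructor
    rintro (a | ei) (b | ej) h
    · exact ⟨h.1.symm, h.2.symm⟩
    · exact h
    · exact h
    · exact ⟨h.1.symm, h.2.symm⟩
  loopless := by
    constructor
    rintro (a | ei) h
    · exact G.irrefl h.1
    · rcases h.2 with h' | h' <;> omega

/-- Lexicographic order on the vertex set of a grid, used to orient its edges. -/
def lexLT {m n : ℕ} : LT (Fin m × Fin n) :=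
  ⟨fun p q => p.1 < q.1 ∨ (p.1 = q.1 ∧ p.2 < q.2)⟩

open SimpleGraph

instance : DecidableRel K6minus.Adj := fun _ _ => inferInstanceAs (Decidable (_ ∧ _))
instance : DecidableRel K313hat.Adj := fun _ _ => inferInstanceAs (Decidable (_ ∧ _ ∧ _))
instance : DecidableRel V8.Adj := fun _ _ => inferInstanceAs (Decidable (_ ∧ _))
instance : DecidableRel Q3.Adj := fun _ _ => inferInstanceAs (Decidable (_ ∨ _ ∨ _))
instance : DecidableRel C7c.Adj := inferInstanceAs (DecidableRel (cycleGraph 7)ᶜ.Adj)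

instance joinG.instDecidableRel {α β : Type*} (G : SimpleGraph α) (H : SimpleGraph β)
    [DecidableRel G.Adj] [DecidableRel H.Adj] : DecidableRel (joinG G H).Adj
  | Sum.inl a, Sum.inl b => inferInstanceAs (Decidable (G.Adj a b))
  | Sum.inl _, Sum.inr _ => inferInstanceAs (Decidable True)
  | Sum.inr _, Sum.inl _ => inferInstanceAs (Decidable True)
  | Sum.inr a, Sum.inr b => inferInstanceAs (Decidable (H.Adj a b))

instance : DecidableRel C5K2c.Adj := joinG.instDecidableRel _ _

instance deltaY.instDecidableRel {α : Type*} [DecidableEq α] (G : SimpleGraph α)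
    [DecidableRel G.Adj] (x y z : α) : DecidableRel (deltaY G x y z).Adj
  | some _, some _ => inferInstanceAs (Decidable (_ ∧ _))
  | some _, none => inferInstanceAs (Decidable (_ ∨ _ ∨ _))
  | none, some _ => inferInstanceAs (Decidable (_ ∨ _ ∨ _))
  | none, none => inferInstanceAs (Decidable False)

section General

variable {α β γ δ : Type*}

def complIso {G : SimpleGraph α} {G' : SimpleGraph β} (φ : G ≃g G') : Gᶜ ≃g G'ᶜ where
  toEquiv := φ.toEquiv
  map_rel_iff' := by simp [φ.injective.ne_iff, φ.map_adj_iff]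

def botIso (e : α ≃ β) : (⊥ : SimpleGraph α) ≃g (⊥ : SimpleGraph β) where
  toEquiv := e
  map_rel_iff' := by simp

def joinGIso {G : SimpleGraph α} {G' : SimpleGraph β} {H : SimpleGraph γ} {H' : SimpleGraph δ}
    (φ : G ≃g G') (ψ : H ≃g H') : joinG G H ≃g joinG G' H' where
  toEquiv := Equiv.sumCongr φ.toEquiv ψ.toEquiv
  map_rel_iff' := by rintro (a | a) (b | b) <;> simp [joinG, φ.map_adj_iff, ψ.map_adj_iff]

def cycleGraphRotate (n : ℕ) (k : Fin (n + 2)) : cycleGraph (n + 2) ≃g cycleGraph (n + 2) where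
  toEquiv := Equiv.addRight k
  map_rel_iff' := by simp [cycleGraph_adj]

def deltaYIso {G : SimpleGraph α} {G' : SimpleGraph β} (φ : G ≃g G') (x y z : α) :
    deltaY G x y z ≃g deltaY G' (φ x) (φ y) (φ z) where
  toEquiv := Equiv.optionCongr φ.toEquiv
  map_rel_iff' := by
    rintro (_ | a) (_ | b) <;> simp [deltaY, φ.injective.eq_iff, φ.map_adj_iff]

lemma deltaY_congr [DecidableEq α] (G : SimpleGraph α) {x y z x' y' z' : α}
    (h : ({x, y, z} : Finset α) = {x', y', z'}) : deltaY G x y z = deltaY G x' y' z' := by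
  have hmem : ∀ v, (v = x ∨ v = y ∨ v = z) ↔ (v = x' ∨ v = y' ∨ v = z') := by
    simpa [Finset.ext_iff] using h
  ext (_ | a) (_ | b) <;> simp only [deltaY, hmem]

lemma exists_le_iso_of_bijective {G : SimpleGraph α} {F : SimpleGraph β} (f : β → α)
    (hf : f.Bijective) (hadj : ∀ a b, F.Adj a b → G.Adj (f a) (f b)) :
    ∃ H ≤ G, Nonempty (H ≃g F) := by
  let e := Equiv.ofBijective f hf
  refine ⟨F.map e.toEmbedding, ?_, ⟨(Iso.map e F).symm⟩⟩
  rintro _ _ ⟨-, a, b, hab, rfl, rfl⟩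
  exact hadj a b hab

lemma HasSpanningF3.of_iso {G : SimpleGraph α} {G' : SimpleGraph β} (h : HasSpanningF3 G)
    (φ : G ≃g G') : HasSpanningF3 G' := by
  obtain ⟨H, hle, hF⟩ := h
  have transfer : ∀ {ε : Type} {F : SimpleGraph ε}, Nonempty (H ≃g F) →
      Nonempty (H.map φ.toEquiv.toEmbedding ≃g F) :=
    fun ⟨e⟩ => ⟨(Iso.map _ H).symm.trans e⟩
  refine ⟨H.map φ.toEquiv.toEmbedding, ?_, ?_⟩
  · rintro _ _ ⟨-, a, b, hab, rfl, rfl⟩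
    exact φ.map_adj_iff.mpr (hle hab)
  · rcases hF with h | h | h | h | h | h <;> simp only [transfer h, true_or, or_true]

lemma HasSpanningF3.deltaY_of_iso [DecidableEq β] {G : SimpleGraph α} {G' : SimpleGraph β}
    {a b c : α} (h : HasSpanningF3 (deltaY G a b c)) (φ : G ≃g G') {x y z : β}
    (hT : ({φ a, φ b, φ c} : Finset β) = {x, y, z}) : HasSpanningF3 (deltaY G' x y z) :=
  deltaY_congr G' hT ▸ h.of_iso (deltaYIso φ a b c)

lemma HasSpanningF3.deltaY_of_perm [DecidableEq α] {G : SimpleGraph α} {a b c : α}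
    (h : HasSpanningF3 (deltaY G a b c)) (σ : Equiv.Perm α)
    (hσ : ∀ u v, G.Adj (σ u) (σ v) ↔ G.Adj u v) {x y z : α}
    (hT : ({σ a, σ b, σ c} : Finset α) = {x, y, z}) : HasSpanningF3 (deltaY G x y z) :=
  h.deltaY_of_iso ⟨σ, hσ _ _⟩ hT

end General

section K6minus

lemma K6minus_adj_perm (σ : Equiv.Perm (Fin 6)) (hσ : ({σ 0, σ 1} : Finset (Fin 6)) = {0, 1})
    (u v : Fin 6) : K6minus.Adj (σ u) (σ v) ↔ K6minus.Adj u v := by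
  have himage (a b : Fin 6) : ({σ a, σ b} : Finset (Fin 6)) = Finset.image σ {a, b} := by
    simp
  change (σ u ≠ σ v ∧ _) ↔ _
  rw [σ.injective.ne_iff, ← hσ, himage, himage, (Finset.image_injective σ.injective).eq_iff]
  rfl

lemma K6minus_triangle_orbit : ∀ x y z : Fin 6, K6minus.Adj x y → K6minus.Adj y z →
    K6minus.Adj x z → ∃ p ∈ ({0, 1} : Finset (Fin 6)),
      ∃ a ∈ ({2, 3, 4, 5} : Finset (Fin 6)), ∃ b ∈ ({2, 3, 4, 5} : Finset (Fin 6)),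
      ∃ c ∈ ({2, 3, 4, 5} : Finset (Fin 6)),
      let σ := Equiv.swap 0 p * Equiv.swap 2 a * Equiv.swap 3 b * Equiv.swap 4 c
      ({σ 0, σ 1} : Finset (Fin 6)) = {0, 1} ∧
        (({σ 0, σ 2, σ 3} : Finset (Fin 6)) = {x, y, z} ∨
          ({σ 2, σ 3, σ 4} : Finset (Fin 6)) = {x, y, z}) := by
  decide

-- A spanning `K313hat` with parts `{none, 4, 5}`, `{1}`, `{0, 2, 3}`.
lemma hasSpanningF3_deltaY_K6minus_023 : HasSpanningF3 (deltaY K6minus 0 2 3) := by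
  obtain ⟨H, hle, hH⟩ :=
    exists_le_iso_of_bijective (G := deltaY K6minus 0 2 3) (F := K313hat)
      ![none, some 4, some 5, some 1, some 0, some 2, some 3]
      (by decide) (by decide)
  exact ⟨H, hle, Or.inr <| Or.inr <| Or.inr <| Or.inl hH⟩

-- A spanning `K313hat` with parts `{none, 0, 1}`, `{5}`, `{2, 3, 4}`.
lemma hasSpanningF3_deltaY_K6minus_234 : HasSpanningF3 (deltaY K6minus 2 3 4) := by
  obtain ⟨H, hle, hH⟩ :=
    exists_le_iso_of_bijective (G := deltaY K6minus 2 3 4) (F := K313hat)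
      ![none, some 0, some 1, some 5, some 2, some 3, some 4]
      (by decide) (by decide)
  exact ⟨H, hle, Or.inr <| Or.inr <| Or.inr <| Or.inl hH⟩

lemma hasSpanningF3_deltaY_K6minus (x y z : Fin 6) (hxy : K6minus.Adj x y)
    (hyz : K6minus.Adj y z) (hxz : K6minus.Adj x z) : HasSpanningF3 (deltaY K6minus x y z) := by
  obtain ⟨p, -, a, -, b, -, c, -, hσ, hT | hT⟩ := K6minus_triangle_orbit x y z hxy hyz hxz
  · exact hasSpanningF3_deltaY_K6minus_023.deltaY_of_perm _ (K6minus_adj_perm _ hσ) hT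
  · exact hasSpanningF3_deltaY_K6minus_234.deltaY_of_perm _ (K6minus_adj_perm _ hσ) hT

end K6minus

section C7c

lemma C7c_triangle_orbit : ∀ x y z : Fin 7, C7c.Adj x y → C7c.Adj y z → C7c.Adj x z →
    ∃ k : Fin 7, ({0 + k, 2 + k, 4 + k} : Finset (Fin 7)) = {x, y, z} := by
  decide

lemma hasSpanningF3_deltaY_C7c_024 : HasSpanningF3 (deltaY C7c 0 2 4) := by
  obtain ⟨H, hle, hH⟩ :=
    exists_le_iso_of_bijective (G := deltaY C7c 0 2 4) (F := V8)
      ![some 0, some 3, some 6, some 2, some 5, some 1, some 4, none]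
      (by decide) (by decide)
  exact ⟨H, hle, Or.inr <| Or.inr <| Or.inr <| Or.inr <| Or.inr hH⟩

lemma hasSpanningF3_deltaY_C7c (x y z : Fin 7) (hxy : C7c.Adj x y) (hyz : C7c.Adj y z)
    (hxz : C7c.Adj x z) : HasSpanningF3 (deltaY C7c x y z) := by
  obtain ⟨k, hT⟩ := C7c_triangle_orbit x y z hxy hyz hxz
  exact hasSpanningF3_deltaY_C7c_024.deltaY_of_iso (complIso (cycleGraphRotate 5 k)) hT

end C7c

section C5K2c

set_option synthInstance.maxSize 256 in
lemma C5K2c_triangle_orbit : ∀ x y z : Fin 5 ⊕ Fin 2, C5K2c.Adj x y → C5K2c.Adj y z →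
    C5K2c.Adj x z → ∃ k : Fin 5, ∃ j : Fin 2,
      ({.inl (0 + k), .inl (1 + k), .inr (0 + j)} : Finset (Fin 5 ⊕ Fin 2)) = {x, y, z} := by
  decide

lemma hasSpanningF3_deltaY_C5K2c_010 :
    HasSpanningF3 (deltaY C5K2c (.inl 0) (.inl 1) (.inr 0)) := by
  obtain ⟨H, hle, hH⟩ :=
    exists_le_iso_of_bijective (G := deltaY C5K2c (.inl 0) (.inl 1) (.inr 0)) (F := Q3)
      (fun v : Fin 2 × Fin 2 × Fin 2 =>
        ![![![some (.inl 0), some (.inl 4)], ![some (.inr 1), some (.inl 3)]],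
          ![![none, some (.inr 0)], ![some (.inl 1), some (.inl 2)]]] v.1 v.2.1 v.2.2)
      (by decide) (by decide)
  exact ⟨H, hle, Or.inr <| Or.inr <| Or.inr <| Or.inr <| Or.inl hH⟩

lemma hasSpanningF3_deltaY_C5K2c (x y z : Fin 5 ⊕ Fin 2) (hxy : C5K2c.Adj x y)
    (hyz : C5K2c.Adj y z) (hxz : C5K2c.Adj x z) : HasSpanningF3 (deltaY C5K2c x y z) := by
  obtain ⟨k, j, hT⟩ := C5K2c_triangle_orbit x y z hxy hyz hxz
  exact hasSpanningF3_deltaY_C5K2c_010.deltaY_of_iso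
    (joinGIso (cycleGraphRotate 3 k) (botIso (Equiv.addRight j))) hT

end C5K2c

section K313hat

lemma K313hat_triangle_orbit : ∀ x y z : Fin 7, K313hat.Adj x y → K313hat.Adj y z →
    K313hat.Adj x z → ∃ a ∈ ({1, 2} : Finset (Fin 7)), ∃ c ∈ ({5, 6} : Finset (Fin 7)),
      let σ := Equiv.swap 1 a * Equiv.swap 5 c
      (∀ u v, K313hat.Adj (σ u) (σ v) ↔ K313hat.Adj u v) ∧
        ({σ 1, σ 3, σ 5} : Finset (Fin 7)) = {x, y, z} := by
  decide

lemma hasSpanningF3_deltaY_K313hat_135 : HasSpanningF3 (deltaY K313hat 1 3 5) := by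
  obtain ⟨H, hle, hH⟩ :=
    exists_le_iso_of_bijective (G := deltaY K313hat 1 3 5) (F := V8)
      ![some 0, some 5, none, some 1, some 4, some 2, some 3, some 6]
      (by decide) (by decide)
  exact ⟨H, hle, Or.inr <| Or.inr <| Or.inr <| Or.inr <| Or.inr hH⟩

lemma hasSpanningF3_deltaY_K313hat (x y z : Fin 7) (hxy : K313hat.Adj x y)
    (hyz : K313hat.Adj y z) (hxz : K313hat.Adj x z) : HasSpanningF3 (deltaY K313hat x y z) := by
  obtain ⟨a, -, c, -, hσ, hT⟩ := K313hat_triangle_orbit x y z hxy hyz hxz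
  exact hasSpanningF3_deltaY_K313hat_135.deltaY_of_perm _ hσ hT

end K313hat

/-- Applying a `(Δ,Y)`-operation to any triangle of a graph in `𝓕₃` yields a
graph with a spanning subgraph isomorphic to a member of `𝓕₃`.  (`Q₃` and `V₈` are
triangle-free, so only the other four graphs occur.) -/
theorem f3_deltaY :
    (∀ x y z : Fin 6, K6minus.Adj x y → K6minus.Adj y z → K6minus.Adj x z →
      HasSpanningF3 (deltaY K6minus x y z)) ∧
    (∀ x y z : Fin 7, C7c.Adj x y → C7c.Adj y z → C7c.Adj x z →
      HasSpanningF3 (deltaY C7c x y z)) ∧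
    (∀ x y z : Fin 5 ⊕ Fin 2, C5K2c.Adj x y → C5K2c.Adj y z → C5K2c.Adj x z →
      HasSpanningF3 (deltaY C5K2c x y z)) ∧
    (∀ x y z : Fin 7, K313hat.Adj x y → K313hat.Adj y z → K313hat.Adj x z →
      HasSpanningF3 (deltaY K313hat x y z)) :=
  ⟨hasSpanningF3_deltaY_K6minus, hasSpanningF3_deltaY_C7c, hasSpanningF3_deltaY_C5K2c,
    hasSpanningF3_deltaY_K313hat⟩

end TwwPaper
end

section
/- A graph has no K4 minor if and only if it is a partial 2-tree, i.e., a subgraph of some 2-tree. -/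
namespace TwwPaper

open Finset

/-- A 2-tree, presented by a construction ordering: the first three vertices form a triangle,
and every later vertex is adjacent among the earlier vertices to exactly the two endpoints of an
existing edge. -/
def IsTwoTree {n : ℕ} (T : SimpleGraph (Fin n)) : Prop :=
  3 ≤ n ∧
  (∀ i j : Fin n, i.val < 3 → j.val < 3 → i ≠ j → T.Adj i j) ∧
  ∀ i : Fin n, 3 ≤ i.val → ∃ a b : Fin n, a.val < i.val ∧ b.val < i.val ∧ a ≠ b ∧
    T.Adj a b ∧ ∀ j : Fin n, j.val < i.val → (T.Adj i j ↔ (j = a ∨ j = b))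

/-- `G` is a partial 2-tree: a subgraph of some 2-tree. -/
def IsPartialTwoTree {V : Type*} (G : SimpleGraph V) : Prop :=
  ∃ (m : ℕ) (T : SimpleGraph (Fin m)), IsTwoTree T ∧
    ∃ f : V → Fin m, Function.Injective f ∧ ∀ a b, G.Adj a b → T.Adj (f a) (f b)


/-!
A 2-tree has no `K₄` minor: its last vertex `v` has at most two neighbours, and they are
adjacent. In a `K₄` model the branch set of `v` cannot be `{v}`, since the three other branch sets
would all have to meet the two neighbours of `v`; so `v` can be removed from its branch set, the
adjacent neighbours keeping that set connected and taking over the edges at `v`.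

Conversely, by Dirac's theorem a `K₄`-minor-free graph has a vertex `v` of degree at most two.
Contracting `v` into a neighbour gives a smaller `K₄`-minor-free graph, by induction a subgraph of
a 2-tree in which the neighbours of `v` are adjacent; attaching `v` to that edge of the 2-tree
embeds the whole graph.

Dirac's theorem (minimum degree three forces a `K₄` minor) is proved by induction on the number of
vertices, for graphs in which a root vertex or root edge is exempt from the degree condition. A
root of low degree is deleted or contracted into a neighbour; an edge without common neighbours,
or a triangle no outside vertex sees twice, is contracted to a new root; and if an edge `pq` has
two common neighbours `r ≠ w`, then either `r` has a neighbour in the component `S` of `w` in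
`G - {p, q, r}`, and `{p}, {q}, {r}, S` is a `K₄` model, or `S ∪ {p, q}` with root edge `pq` is a
smaller instance.
-/

notation "K₄" => (⊤ : SimpleGraph (Fin 4))

open SimpleGraph

section Minor

variable {α β γ : Type*} {F : SimpleGraph α} {G : SimpleGraph β} {H : SimpleGraph γ}

theorem connected_induce_singleton (v : β) : (G.induce {v}).Connected := by
  rw [induce_singleton_eq_top]
  exact connected_top_iff.mpr ⟨⟨v, rfl⟩⟩

theorem IsMinor.trans (hFG : IsMinor F G) (hGH : IsMinor G H) : IsMinor F H := by
  obtain ⟨f, hfne, hfconn, hfdisj, hfadj⟩ := hFG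
  obtain ⟨g, hgne, hgconn, hgdisj, hgadj⟩ := hGH
  refine ⟨fun a => ⋃ b ∈ f a, g b, fun a => ?_, fun a => ?_, fun a a' haa' => ?_,
    fun a a' h => ?_⟩
  · obtain ⟨b, hb⟩ := hfne a
    obtain ⟨x, hx⟩ := hgne b
    exact ⟨x, Set.mem_biUnion hb hx⟩
  · set U := ⋃ b ∈ f a, g b
    have hsub : ∀ b ∈ f a, g b ⊆ U := fun b hb => Set.subset_biUnion_of_mem hb
    have inside : ∀ b (hb : b ∈ f a) x (hx : x ∈ g b) y (hy : y ∈ g b),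
        (H.induce U).Reachable ⟨x, hsub b hb hx⟩ ⟨y, hsub b hb hy⟩ := fun b hb x hx y hy =>
      ((hgconn b).preconnected ⟨x, hx⟩ ⟨y, hy⟩).map (induceHomOfLE H (hsub b hb)).toHom
    have along : ∀ c c' : f a, (G.induce (f a)).Walk c c' →
        ∀ x (hx : x ∈ g c) y (hy : y ∈ g c'),
          (H.induce U).Reachable ⟨x, hsub c c.2 hx⟩ ⟨y, hsub c' c'.2 hy⟩ := by
      intro c c' w
      induction w with
      | nil => exact inside _ (Subtype.prop _)
      | @cons u v _ hadj _ ih =>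
        intro x hx y hy
        obtain ⟨x', hx', y', hy', hxy'⟩ := hgadj _ _ hadj
        have e : (H.induce U).Adj ⟨x', hsub u u.2 hx'⟩ ⟨y', hsub v v.2 hy'⟩ := hxy'
        exact (inside u u.2 x hx x' hx').trans (e.reachable.trans (ih y' hy' y hy))
    obtain ⟨b₀, hb₀⟩ := hfne a
    obtain ⟨x₀, hx₀⟩ := hgne b₀
    rw [connected_iff_exists_forall_reachable]
    refine ⟨⟨x₀, hsub b₀ hb₀ hx₀⟩, fun ⟨y, hy⟩ => ?_⟩
    obtain ⟨b, hb, hyb⟩ := Set.mem_iUnion₂.mp hy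
    obtain ⟨w⟩ := (hfconn a).preconnected ⟨b₀, hb₀⟩ ⟨b, hb⟩
    exact along _ _ w x₀ hx₀ y hyb
  · refine Set.disjoint_iUnion₂_left.2 fun b hb =>
      Set.disjoint_iUnion₂_right.2 fun b' hb' => ?_
    exact hgdisj b b' fun h => (hfdisj a a' haa').ne_of_mem hb hb' h
  · obtain ⟨b, hb, b', hb', hbb'⟩ := hfadj a a' h
    obtain ⟨x, hx, y, hy, hxy⟩ := hgadj b b' hbb'
    exact ⟨x, Set.mem_biUnion hb hx, y, Set.mem_biUnion hb' hy, hxy⟩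

theorem isMinor_of_injective_hom (φ : F →g G) (hφ : Function.Injective φ) : IsMinor F G :=
  ⟨fun a => {φ a}, fun _ => Set.singleton_nonempty _, fun _ => connected_induce_singleton _,
    fun _ _ hab => Set.disjoint_singleton.2 (hφ.ne hab), fun _ _ h => ⟨_, rfl, _, rfl, φ.map_adj h⟩⟩

theorem isMinor_induce (S : Set β) : IsMinor (G.induce S) G :=
  isMinor_of_injective_hom (Embedding.induce S).toHom Subtype.val_injective

theorem isMinor_map {π : β → γ} (hπ : Function.Surjective π)
    (hfib : ∀ w, (G.induce (π ⁻¹' {w})).Connected) : IsMinor (G.map π) G :=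
  ⟨fun w => π ⁻¹' {w}, fun w => (hπ w).imp fun _ hx => hx, hfib,
    fun _ _ h => (Set.disjoint_singleton.2 h).preimage π,
    fun _ _ ⟨_, x, y, hxy, hx, hy⟩ => ⟨x, hx, y, hy, hxy⟩⟩

theorem IsMinor.card_le [Finite β] (h : IsMinor F G) : Nat.card α ≤ Nat.card β := by
  obtain ⟨f, hne, -, hdisj, -⟩ := h
  choose x hx using hne
  exact Nat.card_le_card_of_injective x fun a b hab =>
    by_contra fun h => (hdisj a b h).ne_of_mem (hx a) (hx b) hab

theorem isMinor_induce_of_subset {S : Set β} (f : α → Set β) (hne : ∀ a, (f a).Nonempty)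
    (hconn : ∀ a, (G.induce (f a)).Connected) (hdisj : ∀ a b, a ≠ b → Disjoint (f a) (f b))
    (hadj : ∀ a b, F.Adj a b → ∃ x ∈ f a, ∃ y ∈ f b, G.Adj x y) (hS : ∀ a, f a ⊆ S) :
    IsMinor F (G.induce S) := by
  refine ⟨fun a => Subtype.val ⁻¹' f a, fun a => ?_, fun a => ?_,
    fun a b h => (hdisj a b h).preimage _, fun a b h => ?_⟩
  · obtain ⟨x, hx⟩ := hne a
    exact ⟨⟨x, hS a hx⟩, hx⟩
  · refine (hconn a).map ⟨fun x => ⟨⟨x.1, hS a x.2⟩, x.2⟩, fun h => h⟩ ?_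
    rintro ⟨⟨x, -⟩, hx⟩
    exact ⟨⟨x, hx⟩, rfl⟩
  · obtain ⟨x, hx, y, hy, hxy⟩ := hadj a b h
    exact ⟨⟨x, hS a hx⟩, hx, ⟨y, hS b hy⟩, hy, hxy⟩

end Minor

section Degree

variable {α V W : Type*} {G : SimpleGraph V} {v : V}

theorem exists_mem_notMem_of_encard_lt {s t : Set α} (h : t.encard < s.encard) :
    ∃ x ∈ s, x ∉ t := by
  by_contra! hst
  exact (Set.encard_le_encard hst).not_gt h

theorem encard_pair_le (a b : α) : ({a, b} : Set α).encard ≤ 2 :=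
  (Set.encard_insert_le _ _).trans (by norm_num)

theorem encard_triple_le (a b c : α) : ({a, b, c} : Set α).encard ≤ 3 :=
  (Set.encard_insert_le _ _).trans (by grw [encard_pair_le]; norm_num)

theorem exists_subset_pair_of_encard_lt_three {s : Set α} {a : α} (ha : a ∈ s)
    (hs : s.encard < 3) : ∃ b ∈ s, s ⊆ {a, b} := by
  by_cases h : ∃ b ∈ s, b ≠ a
  · obtain ⟨b, hb, hba⟩ := h
    refine ⟨b, hb, fun c hc => ?_⟩
    by_contra hc'
    simp only [Set.mem_insert_iff, Set.mem_singleton_iff, not_or] at hc'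
    have h3 : ({a, b, c} : Set α).encard = 3 :=
      Set.encard_eq_three.2 ⟨a, b, c, hba.symm, Ne.symm hc'.1, Ne.symm hc'.2, rfl⟩
    have hsub : ({a, b, c} : Set α) ⊆ s := by simp [Set.insert_subset_iff, ha, hb, hc]
    exact (h3 ▸ Set.encard_le_encard hsub).not_gt hs
  · push Not at h
    exact ⟨a, ha, fun c hc => by simp [h c hc]⟩

theorem exists_adj_ne_ne (h : 3 ≤ (G.neighborSet v).encard) (a b : V) :
    ∃ w, G.Adj v w ∧ w ≠ a ∧ w ≠ b := by
  obtain ⟨w, hw, hwab⟩ := exists_mem_notMem_of_encard_lt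
    ((encard_pair_le a b).trans_lt (by norm_num) |>.trans_le h)
  simp only [Set.mem_insert_iff, Set.mem_singleton_iff, not_or] at hwab
  exact ⟨w, hw, hwab⟩

theorem exists_ne_ne_ne (h : 3 ≤ (G.neighborSet v).encard) (a b c : V) :
    ∃ w, w ≠ a ∧ w ≠ b ∧ w ≠ c := by
  have : 3 < (insert v (G.neighborSet v)).encard := by
    rw [Set.encard_insert_of_notMem G.notMem_neighborSet_self]
    calc (3 : ℕ∞) < 3 + 1 := by norm_num
      _ ≤ _ := by gcongr
  obtain ⟨w, -, hw⟩ := exists_mem_notMem_of_encard_lt ((encard_triple_le a b c).trans_lt this)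
  simp only [Set.mem_insert_iff, Set.mem_singleton_iff, not_or] at hw
  exact ⟨w, hw⟩

theorem encard_neighborSet_induce {S : Set V} (hv : v ∈ S) (h : G.neighborSet v ⊆ S) :
    ((G.induce S).neighborSet ⟨v, hv⟩).encard = (G.neighborSet v).encard := by
  rw [← Subtype.val_injective.encard_image]
  congr 1
  ext w
  exact ⟨fun ⟨_, hw, hw'⟩ => hw' ▸ hw, fun hw => ⟨⟨w, h hw⟩, hw, rfl⟩⟩

theorem encard_neighborSet_le_map {π : V → W} (hfib : ∀ x, π x = π v → x = v)
    (hinj : Set.InjOn π (G.neighborSet v)) :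
    (G.neighborSet v).encard ≤ ((G.map π).neighborSet (π v)).encard :=
  Set.encard_le_encard_of_injOn
    (fun w hw => map_adj_apply' hw fun h => hw.ne (hfib w h.symm).symm) hinj

end Degree

section Collapse

variable {V : Type*} {G : SimpleGraph V} {S : Set V} {s x y : V}

noncomputable def collapse (S : Set V) (s : V) (x : V) : {y : V // y = s ∨ y ∉ S} := by
  classical exact if h : x ∈ S then ⟨s, Or.inl rfl⟩ else ⟨x, Or.inr h⟩

theorem collapse_of_mem (h : x ∈ S) : collapse S s x = ⟨s, Or.inl rfl⟩ := by
  simp [collapse, h]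

theorem collapse_of_notMem (h : x ∉ S) : collapse S s x = ⟨x, Or.inr h⟩ := by
  simp [collapse, h]

theorem collapse_surjective (hs : s ∈ S) : Function.Surjective (collapse S s) := by
  rintro ⟨y, rfl | hy⟩
  exacts [⟨y, collapse_of_mem hs⟩, ⟨y, collapse_of_notMem hy⟩]

theorem collapse_eq_collapse_iff (hs : s ∈ S) :
    collapse S s x = collapse S s y ↔ x = y ∨ x ∈ S ∧ y ∈ S := by
  by_cases hx : x ∈ S <;> by_cases hy : y ∈ S <;>
    simp [collapse_of_mem, collapse_of_notMem, hx, hy, Subtype.ext_iff] <;>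
    constructor <;> rintro rfl <;> contradiction

theorem isMinor_map_collapse (hs : s ∈ S) (hS : (G.induce S).Connected) :
    IsMinor (G.map (collapse S s)) G := by
  refine isMinor_map (collapse_surjective hs) fun w => ?_
  obtain ⟨x, rfl⟩ := collapse_surjective hs w
  by_cases hx : x ∈ S
  · have : collapse S s ⁻¹' {collapse S s x} = S := by
      ext y
      simpa [collapse_eq_collapse_iff hs, hx] using fun h : y = x => h ▸ hx
    rwa [this]
  · have : collapse S s ⁻¹' {collapse S s x} = {x} := by
      ext y
      simp [collapse_eq_collapse_iff hs, hx]
    rw [this]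
    exact connected_induce_singleton x

theorem le_encard_neighborSet_map_collapse (hs : s ∈ S) (hx : x ∉ S)
    (h : (G.neighborSet x ∩ S).Subsingleton) :
    (G.neighborSet x).encard ≤ ((G.map (collapse S s)).neighborSet (collapse S s x)).encard := by
  refine encard_neighborSet_le_map (fun y hy => ?_) fun y hy z hz hyz => ?_
  · exact ((collapse_eq_collapse_iff hs).1 hy).resolve_right fun h => hx h.2
  · exact ((collapse_eq_collapse_iff hs).1 hyz).elim id fun h' => h ⟨hy, h'.1⟩ ⟨hz, h'.2⟩

theorem card_collapse_lt [Finite V] {t : V} (ht : t ∈ S) (hts : t ≠ s) :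
    Nat.card {y : V // y = s ∨ y ∉ S} < Nat.card V :=
  Finite.card_subtype_lt (x := t) (by simp [ht, hts])

end Collapse

section Dirac

variable {V : Type*} {G : SimpleGraph V}

theorem isMinor_K4_of_triangle {p q r : V} (hpq : G.Adj p q) (hpr : G.Adj p r) (hqr : G.Adj q r)
    {S : Set V} (hS : (G.induce S).Connected) (hpS : p ∉ S) (hqS : q ∉ S) (hrS : r ∉ S)
    (hp : ∃ x ∈ S, G.Adj p x) (hq : ∃ x ∈ S, G.Adj q x) (hr : ∃ x ∈ S, G.Adj r x) :
    IsMinor K₄ G := by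
  have hSne : S.Nonempty := hp.imp fun _ h => h.1
  refine ⟨![{p}, {q}, {r}, S], fun i => ?_, fun i => ?_, fun i j hij => ?_, fun i j hij => ?_⟩
  · fin_cases i <;> simp [hSne]
  · fin_cases i <;> simp [hS]
  · fin_cases i <;> fin_cases j <;> simp_all [hpq.ne, hpr.ne, hqr.ne, hpq.ne', hpr.ne', hqr.ne']
  · fin_cases i <;> fin_cases j <;> simp_all [adj_comm]

theorem exists_connected_closed (X : Set V) {w : V} (hw : w ∉ X) :
    ∃ S : Set V, w ∈ S ∧ Disjoint S X ∧ (G.induce S).Connected ∧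
      ∀ x ∈ S, ∀ y ∉ X, G.Adj x y → y ∈ S := by
  set C := (G.induce Xᶜ).connectedComponentMk ⟨w, hw⟩
  refine ⟨Subtype.val '' C.supp, ⟨_, rfl, rfl⟩, ?_, ?_, ?_⟩
  · exact Set.disjoint_left.2 fun _ ⟨x, _, hx⟩ => hx ▸ x.2
  · refine C.connected_toSimpleGraph.map ⟨fun x => ⟨x.1.1, x.1, x.2, rfl⟩, fun h => h⟩ ?_
    rintro ⟨_, x, hx, rfl⟩
    exact ⟨⟨x, hx⟩, rfl⟩
  · rintro _ ⟨x, hx, rfl⟩ y hy hxy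
    exact ⟨⟨y, hy⟩, C.mem_supp_of_adj_mem_supp hx hxy, rfl⟩

def RootedDegreeThree (G : SimpleGraph V) (p q : V) : Prop :=
  (p = q ∨ G.Adj p q) ∧ (∃ v, v ≠ p ∧ v ≠ q) ∧
    ∀ v, v ≠ p → v ≠ q → 3 ≤ (G.neighborSet v).encard

theorem RootedDegreeThree.symm {p q : V} (h : RootedDegreeThree G p q) :
    RootedDegreeThree G q p :=
  ⟨h.1.imp Eq.symm Adj.symm, h.2.1.imp fun _ hv => ⟨hv.2, hv.1⟩,
    fun v hq hp => h.2.2 v hp hq⟩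

end Dirac

universe u

def DiracBelow (n : ℕ) : Prop :=
  ∀ (W : Type u) [Finite W] (H : SimpleGraph W) (p q : W),
    Nat.card W < n → RootedDegreeThree H p q → IsMinor K₄ H

namespace DiracBelow

variable {V : Type u} [Finite V] {G : SimpleGraph V} (ih : DiracBelow.{u} (Nat.card V))
include ih

theorem isMinor_K4_of_collapse {S : Set V} {s t : V} (hs : s ∈ S) (ht : t ∈ S) (hts : t ≠ s)
    (hS : (G.induce S).Connected) {p q} (h : RootedDegreeThree (G.map (collapse S s)) p q) :
    IsMinor K₄ G :=
  (ih _ _ p q (card_collapse_lt ht hts) h).trans (isMinor_map_collapse hs hS)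

theorem isMinor_K4_of_collapse_root {S : Set V} {s t : V} (hs : s ∈ S) (ht : t ∈ S)
    (hts : t ≠ s) (hS : (G.induce S).Connected) (hout : ∃ v, v ∉ S)
    (hdeg : ∀ v ∉ S, 3 ≤ (G.neighborSet v).encard ∧ (G.neighborSet v ∩ S).Subsingleton) :
    IsMinor K₄ G := by
  have hroot : ∀ v, collapse S s v = collapse S s s ↔ v ∈ S := fun v => by
    rw [collapse_eq_collapse_iff hs]
    exact ⟨fun h => h.elim (· ▸ hs) And.left, fun h => Or.inr ⟨h, hs⟩⟩
  refine ih.isMinor_K4_of_collapse hs ht hts hS (p := collapse S s s) (q := collapse S s s)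
    ⟨Or.inl rfl, ?_, fun w hw _ => ?_⟩
  · obtain ⟨v, hv⟩ := hout
    exact ⟨_, mt (hroot v).1 hv, mt (hroot v).1 hv⟩
  · obtain ⟨v, rfl⟩ := collapse_surjective hs w
    have hv : v ∉ S := mt (hroot v).2 hw
    exact (hdeg v hv).1.trans (le_encard_neighborSet_map_collapse hs hv (hdeg v hv).2)

theorem isMinor_K4_of_isolated_root {x y : V} (h : RootedDegreeThree G x y)
    (hx : G.neighborSet x = ∅) : IsMinor K₄ G := by
  obtain ⟨hxy, ⟨v, hvx, hvy⟩, hdeg⟩ := h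
  have hnx : ∀ u, ¬ G.Adj u x := fun u h => (hx ▸ h.symm : u ∈ (∅ : Set V))
  obtain rfl : x = y := hxy.elim id fun h => absurd h.symm (hnx y)
  refine (ih _ (G.induce {x}ᶜ) ⟨v, hvx⟩ ⟨v, hvx⟩ (Finite.card_subtype_lt (x := x) (by simp))
    ⟨Or.inl rfl, ?_, ?_⟩).trans (isMinor_induce _)
  · obtain ⟨w, hw, hwx, -⟩ := exists_adj_ne_ne (hdeg v hvx hvx) x x
    have hwv : (⟨w, hwx⟩ : ({x}ᶜ : Set V)) ≠ ⟨v, hvx⟩ :=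
      fun h => hw.ne (congrArg Subtype.val h).symm
    exact ⟨_, hwv, hwv⟩
  · rintro ⟨u, hux⟩ - -
    rw [encard_neighborSet_induce hux fun w hw (hwx : w = x) => hnx u (hwx ▸ hw)]
    exact hdeg u hux hux

theorem isMinor_K4_of_low_degree_root {x y : V} (h : RootedDegreeThree G x y)
    (hx : (G.neighborSet x).encard < 3) : IsMinor K₄ G := by
  rcases (G.neighborSet x).eq_empty_or_nonempty with hiso | ⟨a, ha⟩
  · exact ih.isMinor_K4_of_isolated_root h hiso
  obtain ⟨hxy, ⟨v, hvx, hvy⟩, hdeg⟩ := h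
  obtain ⟨b, hb, hsub⟩ := exists_subset_pair_of_encard_lt_three ha hx
  set S : Set V := {x, a}
  have hs : a ∈ S := by simp [S]
  have hcoll : ∀ u w, collapse S a u = collapse S a w ↔ u = w ∨ u ∈ S ∧ w ∈ S :=
    fun _ _ => collapse_eq_collapse_iff hs
  have hnot : ∀ u, u ≠ x → u ≠ a → u ∉ S := fun u hux hua => by simp [S, hux, hua]
  refine ih.isMinor_K4_of_collapse hs (t := x) (by simp [S]) (G.ne_of_adj ha)
    (induce_pair_connected_of_adj ha) (p := collapse S a a) (q := collapse S a b) ⟨?_, ?_, ?_⟩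
  · by_cases hba : b = a
    · exact Or.inl (congrArg (collapse S a) hba.symm)
    have hxa : collapse S a x = collapse S a a := (hcoll x a).2 (Or.inr ⟨by simp [S], hs⟩)
    refine Or.inr (hxa ▸ map_adj_apply' hb fun h => ?_)
    rcases (hcoll x b).1 h with h | ⟨-, hbS⟩
    exacts [G.ne_of_adj hb h, hnot b (G.ne_of_adj hb).symm hba hbS]
  · obtain ⟨u, hux, hua, hub⟩ := exists_ne_ne_ne (hdeg v hvx hvy) x a b
    refine ⟨collapse S a u, fun h => ?_, fun h => ?_⟩
    · exact ((hcoll u a).1 h).elim hua fun h => hnot u hux hua h.1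
    · exact ((hcoll u b).1 h).elim hub fun h => hnot u hux hua h.1
  · intro w hwa hwb
    obtain ⟨u, rfl⟩ := collapse_surjective hs w
    have huS : u ∉ S := fun h => hwa ((hcoll u a).2 (Or.inr ⟨h, hs⟩))
    have hub : u ≠ b := fun h => hwb (h ▸ rfl)
    have hux : u ≠ x := fun h => huS (by simp [S, h])
    have hua : u ≠ a := fun h => huS (by simp [S, h])
    have huy : u ≠ y := by
      rintro rfl
      rcases hxy with rfl | hxu
      exacts [hux rfl, (hsub hxu).elim hua hub]
    have hxu : x ∉ G.neighborSet u := fun h => (hsub h.symm).elim hua hub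
    refine (hdeg u hux huy).trans (le_encard_neighborSet_map_collapse hs huS ?_)
    refine (Set.subsingleton_singleton (a := a)).anti fun z ⟨hz, hzS⟩ => ?_
    rcases hzS with rfl | rfl
    exacts [absurd hz hxu, rfl]

theorem isMinor_K4_of_two_common_neighbors (h3 : ∀ v, 3 ≤ (G.neighborSet v).encard)
    {p q r w : V} (hpq : G.Adj p q) (hrp : G.Adj r p) (hrq : G.Adj r q) (hwp : G.Adj w p)
    (hwq : G.Adj w q) (hwr : w ≠ r) : IsMinor K₄ G := by
  set X : Set V := {p, q, r}
  obtain ⟨S, hwS, hSX, hS, hclosed⟩ := exists_connected_closed (G := G) (w := w) X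
    (by simp [X, G.ne_of_adj hwp, G.ne_of_adj hwq, hwr])
  have hXS : ∀ z ∈ X, z ∉ S := fun z hz hzS => hSX.ne_of_mem hzS hz rfl
  have hrS := hXS r (by simp [X])
  by_cases hr : ∃ z ∈ S, G.Adj r z
  · exact isMinor_K4_of_triangle hpq hrp.symm hrq.symm hS (hXS p (by simp [X]))
      (hXS q (by simp [X])) hrS ⟨w, hwS, hwp.symm⟩ ⟨w, hwS, hwq.symm⟩ hr
  push Not at hr
  -- `{p, q}` separates `S` from `r`, so `S` with the root edge `pq` is a smaller instance
  set U : Set V := insert p (insert q S)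
  have hrU : r ∉ U := by simp [U, G.ne_of_adj hrp, G.ne_of_adj hrq, hrS]
  have hwU : w ∈ U := by simp [U, hwS]
  refine (ih U (G.induce U) ⟨p, by simp [U]⟩ ⟨q, by simp [U]⟩ (Finite.card_subtype_lt hrU)
    ⟨Or.inr hpq, ⟨⟨w, hwU⟩, ?_, ?_⟩, ?_⟩).trans (isMinor_induce U)
  · exact fun h => G.ne_of_adj hwp (congrArg Subtype.val h)
  · exact fun h => G.ne_of_adj hwq (congrArg Subtype.val h)
  · rintro ⟨v, hv⟩ hvp hvq
    have hvS : v ∈ S := by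
      simp only [U, Set.mem_insert_iff] at hv
      exact hv.resolve_left (fun h => hvp (Subtype.ext h)) |>.resolve_left
        fun h => hvq (Subtype.ext h)
    have hN : G.neighborSet v ⊆ U := fun z hz => by
      by_cases hzX : z ∈ X
      · simp only [X, Set.mem_insert_iff, Set.mem_singleton_iff] at hzX
        rcases hzX with rfl | rfl | rfl
        exacts [by simp [U], by simp [U], absurd hz.symm (hr v hvS)]
      · exact Set.mem_insert_of_mem _ (Set.mem_insert_of_mem _ (hclosed v hvS z hzX hz))
    rw [encard_neighborSet_induce hv hN]
    exact h3 v

theorem isMinor_K4_of_unique_common_neighbor (h3 : ∀ v, 3 ≤ (G.neighborSet v).encard)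
    (huniq : ∀ p q r w, G.Adj p q → G.Adj r p → G.Adj r q → G.Adj w p → G.Adj w q → w = r)
    {p q r : V} (hpq : G.Adj p q) (hpr : G.Adj p r) (hqr : G.Adj q r) : IsMinor K₄ G := by
  set X : Set V := {p, q, r}
  have hX : G.IsClique X := by
    simp [X, Set.pairwise_insert, hpq, hpr, hqr, hpq.symm, hpr.symm, hqr.symm]
  have hX3 : X.encard = 3 := Set.encard_eq_three.2
    ⟨p, q, r, G.ne_of_adj hpq, G.ne_of_adj hpr, G.ne_of_adj hqr, rfl⟩
  have hXconn : (G.induce X).Connected := by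
    have : X = {p, q} ∪ {r} := by rw [Set.insert_union, Set.singleton_union]
    rw [this]
    exact connected_induce_union (induce_pair_connected_of_adj hpq).preconnected
      (connected_induce_singleton r).preconnected (by simp) rfl hqr
  obtain ⟨z, hzp, hzq, hzr⟩ := exists_ne_ne_ne (h3 p) p q r
  refine ih.isMinor_K4_of_collapse_root (S := X) (t := q) (by simp [X]) (by simp [X])
    (G.ne_of_adj hpq).symm hXconn ⟨z, by simp [X, hzp, hzq, hzr]⟩ fun v hv => ⟨h3 v, ?_⟩
  -- two neighbours `a ≠ b` of `v` in the triangle would have the third corner as a second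
  -- common neighbour
  rintro a ⟨ha, haX⟩ b ⟨hb, hbX⟩
  by_contra hab
  obtain ⟨c, hcX, hc⟩ := exists_mem_notMem_of_encard_lt (s := X)
    ((encard_pair_le a b).trans_lt (by rw [hX3]; norm_num))
  simp only [Set.mem_insert_iff, Set.mem_singleton_iff, not_or] at hc
  exact hv (huniq a b c v (hX haX hbX hab) (hX hcX haX hc.1) (hX hcX hbX hc.2) ha hb ▸ hcX)

theorem isMinor_K4_of_three_le [Nonempty V] (h3 : ∀ v, 3 ≤ (G.neighborSet v).encard) :
    IsMinor K₄ G := by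
  by_cases h0 : ∃ u w, G.Adj u w ∧ ∀ z, ¬ (G.Adj u z ∧ G.Adj w z)
  · obtain ⟨u, w, huw, hnc⟩ := h0
    obtain ⟨z, hzu, hzw, -⟩ := exists_ne_ne_ne (h3 u) u w u
    refine ih.isMinor_K4_of_collapse_root (S := {w, u}) (by simp) (by simp)
      (G.ne_of_adj huw).symm (induce_pair_connected_of_adj huw.symm)
      ⟨z, by simp [hzu, hzw]⟩ fun v _ => ⟨h3 v, ?_⟩
    rintro a ⟨ha, haS⟩ b ⟨hb, hbS⟩
    simp only [Set.mem_insert_iff, Set.mem_singleton_iff] at haS hbS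
    rcases haS with rfl | rfl <;> rcases hbS with rfl | rfl
    exacts [rfl, (hnc v ⟨hb.symm, ha.symm⟩).elim, (hnc v ⟨ha.symm, hb.symm⟩).elim, rfl]
  push Not at h0
  by_cases h2 : ∃ p q r w, G.Adj p q ∧ G.Adj r p ∧ G.Adj r q ∧ G.Adj w p ∧ G.Adj w q ∧ w ≠ r
  · obtain ⟨p, q, r, w, hpq, hrp, hrq, hwp, hwq, hwr⟩ := h2
    exact ih.isMinor_K4_of_two_common_neighbors h3 hpq hrp hrq hwp hwq hwr
  push Not at h2
  obtain ⟨p⟩ := ‹Nonempty V›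
  obtain ⟨q, hpq, -⟩ := exists_adj_ne_ne (h3 p) p p
  obtain ⟨r, hpr, hqr⟩ := h0 p q hpq
  exact ih.isMinor_K4_of_unique_common_neighbor h3 h2 hpq hpr hqr

theorem isMinor_K4_of_rooted {p q : V} (h : RootedDegreeThree G p q) : IsMinor K₄ G := by
  by_cases hp : (G.neighborSet p).encard < 3
  · exact ih.isMinor_K4_of_low_degree_root h hp
  by_cases hq : (G.neighborSet q).encard < 3
  · exact ih.isMinor_K4_of_low_degree_root h.symm hq
  have : Nonempty V := ⟨p⟩
  refine ih.isMinor_K4_of_three_le fun v => ?_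
  by_cases hvp : v = p
  · exact hvp ▸ not_lt.1 hp
  by_cases hvq : v = q
  · exact hvq ▸ not_lt.1 hq
  exact h.2.2 v hvp hvq

end DiracBelow

theorem diracBelow (n : ℕ) : DiracBelow.{u} n := by
  induction n using Nat.strong_induction_on with
  | _ n IH => exact fun _ _ _ _ _ hW h => (IH _ hW).isMinor_K4_of_rooted h

theorem isMinor_K4_of_three_le {V : Type*} [Finite V] [Nonempty V] {G : SimpleGraph V}
    (h3 : ∀ v, 3 ≤ (G.neighborSet v).encard) : IsMinor K₄ G :=
  (diracBelow _).isMinor_K4_of_three_le h3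

section Simplicial

variable {α V : Type*} {F : SimpleGraph α} {G : SimpleGraph V} {v : V}

theorem connected_induce_diff_singleton {B : Set V} (hB : (G.induce B).Connected) (hvB : v ∈ B)
    (hne : (B \ {v}).Nonempty) (hv : G.IsClique (G.neighborSet v)) :
    (G.induce (B \ {v})).Connected := by
  classical
  obtain ⟨u, huB, huv⟩ := hne
  obtain ⟨p⟩ := hB.preconnected ⟨v, hvB⟩ ⟨u, huB⟩
  have hw := p.adj_snd (p.not_nil_of_ne fun h => huv (congrArg Subtype.val h).symm)
  set w := p.snd
  -- send `v` to its neighbour `w`; every edge at `v` becomes an edge or a loop at `w`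
  let φ : B → ↥(B \ {v}) := fun x => if h : x.1 = v
    then ⟨w, w.2, fun h' => hw.ne (Subtype.ext (Set.mem_singleton_iff.1 h').symm)⟩
    else ⟨x, x.2, h⟩
  have hφ : ∀ x y, (G.induce B).Adj x y → (G.induce (B \ {v})).Reachable (φ x) (φ y) := by
    have key : ∀ x y : B, x.1 = v → y.1 ≠ v → (G.induce B).Adj x y →
        (G.induce (B \ {v})).Reachable (φ x) (φ y) := by
      rintro x ⟨y, hyB⟩ hx hy hxy
      simp only [φ, dif_pos hx, dif_neg hy]
      by_cases hwy : w.1 = y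
      · subst hwy
        rfl
      · exact Adj.reachable (hv hw (hx ▸ hxy : G.Adj v y) hwy)
    intro x y hxy
    by_cases hx : x.1 = v
    · exact key x y hx (fun hy => hxy.ne (Subtype.ext (hx.trans hy.symm))) hxy
    by_cases hy : y.1 = v
    · exact (key y x hy hx hxy.symm).symm
    simp only [φ, dif_neg hx, dif_neg hy]
    exact Adj.reachable hxy
  refine (connected_iff _).2 ⟨fun x y => ?_, ⟨⟨u, huB, huv⟩⟩⟩
  have hr := ((reachable_iff_reflTransGen _ _).1
    (hB.preconnected ⟨x.1, x.2.1⟩ ⟨y.1, y.2.1⟩)).lift' φ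
      fun a b hab => (reachable_iff_reflTransGen _ _).1 (hφ a b hab)
  have hx : x.1 ≠ v := x.2.2
  have hy : y.1 ≠ v := y.2.2
  simpa only [φ, dif_neg hx, dif_neg hy] using (reachable_iff_reflTransGen _ _).2 hr

theorem exists_mem_ne_of_encard_neighborSet_lt {f : α → Set V}
    (hdisj : ∀ a b, a ≠ b → Disjoint (f a) (f b))
    (hadj : ∀ a b, F.Adj a b → ∃ x ∈ f a, ∃ y ∈ f b, G.Adj x y) {i : α}
    (hF : (G.neighborSet v).encard < (F.neighborSet i).encard) : ∃ u ∈ f i, u ≠ v := by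
  by_contra! hsub
  -- otherwise the branch sets of the neighbours of `i` meet the neighbourhood of `v`
  -- in pairwise distinct vertices
  have hy : ∀ j ∈ F.neighborSet i, ∃ y ∈ f j, G.Adj v y := fun j hj => by
    obtain ⟨x, hx, y, hy, hxy⟩ := hadj i j hj
    exact ⟨y, hy, hsub x hx ▸ hxy⟩
  have : Nonempty V := ⟨v⟩
  choose! g hgf hgv using hy
  refine hF.not_ge (Set.encard_le_encard_of_injOn hgv fun j hj j' hj' hjj' => ?_)
  by_contra hjj
  exact (hdisj j j' hjj).ne_of_mem (hgf j hj) (hgf j' hj') hjj'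

theorem IsMinor.induce_compl_singleton
    (hF : ∀ i, (G.neighborSet v).encard < (F.neighborSet i).encard)
    (hv : G.IsClique (G.neighborSet v)) (h : IsMinor F G) : IsMinor F (G.induce {v}ᶜ) := by
  obtain ⟨f, hne, hconn, hdisj, hadj⟩ := h
  have hnbr : ∀ i, v ∈ f i → ∃ w ∈ f i, G.Adj v w := by
    intro i hvi
    obtain ⟨u, hu, huv⟩ := exists_mem_ne_of_encard_neighborSet_lt hdisj hadj (hF i)
    obtain ⟨p⟩ := (hconn i).preconnected ⟨v, hvi⟩ ⟨u, hu⟩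
    exact ⟨p.snd.1, p.snd.2,
      p.adj_snd (p.not_nil_of_ne fun h => huv (congrArg Subtype.val h).symm)⟩
  have reroute : ∀ i j, i ≠ j → ∀ y ∈ f j, G.Adj v y → v ∈ f i →
      ∃ x ∈ f i \ {v}, G.Adj x y ∧ y ≠ v := by
    intro i j hij y hy hvy hvi
    obtain ⟨w, hw, hvw⟩ := hnbr i hvi
    exact ⟨w, ⟨hw, hvw.ne'⟩, hv hvw hvy fun h => (hdisj i j hij).ne_of_mem hw hy h, hvy.ne'⟩
  refine isMinor_induce_of_subset (fun i => f i \ {v}) (fun i => ?_) (fun i => ?_)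
    (fun i j hij => (hdisj i j hij).mono Set.sdiff_subset Set.sdiff_subset) (fun i j hij => ?_)
    fun i x hx => hx.2
  · by_cases hvi : v ∈ f i
    · obtain ⟨w, hw, hvw⟩ := hnbr i hvi
      exact ⟨w, hw, hvw.ne'⟩
    · rw [Set.sdiff_singleton_eq_self hvi]
      exact hne i
  · by_cases hvi : v ∈ f i
    · obtain ⟨w, hw, hvw⟩ := hnbr i hvi
      exact connected_induce_diff_singleton (hconn i) hvi ⟨w, hw, hvw.ne'⟩ hv
    · rw [Set.sdiff_singleton_eq_self hvi]
      exact hconn i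
  · obtain ⟨x, hx, y, hy, hxy⟩ := hadj i j hij
    by_cases hxv : x = v
    · subst hxv
      obtain ⟨x', hx', hx'y, hyv⟩ := reroute i j hij.ne y hy hxy hx
      exact ⟨x', hx', y, ⟨hy, hyv⟩, hx'y⟩
    by_cases hyv : y = v
    · subst hyv
      obtain ⟨y', hy', hy'x, -⟩ := reroute j i hij.ne.symm x hx hxy.symm hy
      exact ⟨x, ⟨hx, hxv⟩, y', hy', hy'x.symm⟩
    exact ⟨x, ⟨hx, hxv⟩, y, ⟨hy, hyv⟩, hxy⟩

end Simplicial

section TwoTree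

variable {m : ℕ} {T : SimpleGraph (Fin m)}

theorem IsTwoTree.exists_adj (hT : IsTwoTree T) (i : Fin m) : ∃ j, T.Adj i j := by
  obtain ⟨hm, hsmall, hstep⟩ := hT
  by_cases hi : i.val < 3
  · refine ⟨⟨(i.val + 1) % 3, by omega⟩, hsmall _ _ hi (Nat.mod_lt _ (by norm_num)) fun h => ?_⟩
    have := congrArg Fin.val h
    simp only at this
    omega
  · obtain ⟨a, b, ha, -, -, -, hiff⟩ := hstep i (by omega)
    exact ⟨a, (hiff a ha).2 (Or.inl rfl)⟩

theorem IsTwoTree.comap_castSucc {T : SimpleGraph (Fin (m + 1))} (hT : IsTwoTree T)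
    (hm : 3 ≤ m) : IsTwoTree (T.comap Fin.castSucc) := by
  obtain ⟨-, hsmall, hstep⟩ := hT
  refine ⟨hm, fun i j hi hj hij => hsmall _ _ hi hj (Fin.castSucc_injective _ |>.ne hij),
    fun i hi => ?_⟩
  obtain ⟨a, b, ha, hb, hab, hTab, hiff⟩ := hstep i.castSucc hi
  have ha' : a.val < m := ha.trans i.isLt
  have hb' : b.val < m := hb.trans i.isLt
  refine ⟨a.castLT ha', b.castLT hb', ha, hb, fun h => hab (by simpa [Fin.ext_iff] using h),
    by simpa using hTab, fun j hj => ?_⟩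
  simp only [comap_adj]
  rw [hiff j.castSucc hj]
  simp [Fin.ext_iff]

theorem IsTwoTree.exists_neighborSet_last_subset {T : SimpleGraph (Fin (m + 1))}
    (hT : IsTwoTree T) (hm : 3 ≤ m) :
    ∃ a b, T.Adj a b ∧ T.neighborSet (Fin.last m) ⊆ {a, b} := by
  obtain ⟨a, b, -, -, -, hab, hiff⟩ := hT.2.2 (Fin.last m) (by simp; omega)
  exact ⟨a, b, hab, fun j hj => (hiff j (Fin.val_lt_last fun h => T.irrefl (h ▸ hj))).1 hj⟩

theorem IsTwoTree.not_isMinor_K4 {n : ℕ} {T : SimpleGraph (Fin n)} (hT : IsTwoTree T) :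
    ¬ IsMinor K₄ T := by
  induction n with
  | zero => exact absurd hT.1 (by norm_num)
  | succ n ih =>
    intro hK
    by_cases hn : n < 3
    · have := hK.card_le
      rw [Nat.card_fin, Nat.card_fin] at this
      omega
    obtain ⟨a, b, hab, hsub⟩ := hT.exists_neighborSet_last_subset (by omega)
    have hdeg (i : Fin 4) :
        (T.neighborSet (Fin.last n)).encard < ((⊤ : SimpleGraph (Fin 4)).neighborSet i).encard := by
      have h3 : ((⊤ : SimpleGraph (Fin 4)).neighborSet i).encard = 3 := by
        rw [neighborSet_top, Set.encard_eq_coe_toFinset_card]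
        simp [Finset.card_compl]
      rw [h3]
      exact (Set.encard_le_encard hsub).trans_lt ((encard_pair_le a b).trans_lt (by norm_num))
    have hK' := hK.induce_compl_singleton hdeg ((isClique_pair.2 fun _ => hab).subset hsub)
    refine ih (hT.comap_castSucc (by omega)) (hK'.trans (isMinor_of_injective_hom
      ⟨fun x => x.1.castPred (Set.mem_compl_singleton_iff.1 x.2), fun h => by simpa using h⟩
      fun x y h => ?_))
    exact Subtype.ext (Fin.ext (by simpa using congrArg Fin.val h))

end TwoTree

section Attach

variable {m : ℕ} {T : SimpleGraph (Fin m)} {p q : Fin m}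

def attach (T : SimpleGraph (Fin m)) (p q : Fin m) : SimpleGraph (Fin (m + 1)) :=
  T.map Fin.castSuccEmb ⊔ fromEdgeSet {s(Fin.last m, p.castSucc), s(Fin.last m, q.castSucc)}

theorem attach_adj_castSucc {i j : Fin m} :
    (attach T p q).Adj i.castSucc j.castSucc ↔ T.Adj i j := by
  simpa [attach, map_adj'] using fun h : T.Adj i j => h.ne

theorem attach_adj_last {j : Fin m} :
    (attach T p q).Adj (Fin.last m) j.castSucc ↔ j = p ∨ j = q := by
  simp [attach, map_adj', (Fin.castSucc_ne_last j).symm]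

theorem IsTwoTree.attach (hT : IsTwoTree T) (hpq : T.Adj p q) : IsTwoTree (attach T p q) := by
  obtain ⟨hm, hsmall, hstep⟩ := hT
  have hcast : ∀ j : Fin (m + 1), j.val < m → ∃ j' : Fin m, j'.castSucc = j :=
    fun j hj => ⟨j.castLT hj, Fin.castSucc_castLT _ _⟩
  refine ⟨by omega, fun i j hi hj hij => ?_, fun i hi => ?_⟩
  · obtain ⟨i, rfl⟩ := hcast i (by omega)
    obtain ⟨j, rfl⟩ := hcast j (by omega)
    exact attach_adj_castSucc.2 (hsmall i j hi hj (Fin.castSucc_injective _ |>.ne_iff.1 hij))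
  induction i using Fin.lastCases with
  | last =>
    refine ⟨p.castSucc, q.castSucc, by simp, by simp, (Fin.castSucc_injective _).ne hpq.ne,
      attach_adj_castSucc.2 hpq, fun j hj => ?_⟩
    obtain ⟨j, rfl⟩ := hcast j (by simpa using hj)
    simp [attach_adj_last]
  | cast i =>
    obtain ⟨a, b, ha, hb, hab, hTab, hiff⟩ := hstep i (by simpa using hi)
    refine ⟨a.castSucc, b.castSucc, ha, hb, (Fin.castSucc_injective _).ne hab,
      attach_adj_castSucc.2 hTab, fun j hj => ?_⟩
    obtain ⟨j, rfl⟩ := hcast j (by rw [Fin.val_castSucc] at hj; omega)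
    simp [attach_adj_castSucc, hiff j (by simpa using hj)]

theorem isPartialTwoTree_of_attach {V : Type*} {G : SimpleGraph V} {v : V} (hT : IsTwoTree T)
    (hpq : T.Adj p q) (f : V → Fin m) (hf : Set.InjOn f {v}ᶜ)
    (hG : ∀ x y, x ≠ v → y ≠ v → G.Adj x y → T.Adj (f x) (f y))
    (hv : ∀ x, G.Adj v x → f x = p ∨ f x = q) : IsPartialTwoTree G := by
  classical
  refine ⟨m + 1, attach T p q, hT.attach hpq,
    fun x => if x = v then Fin.last m else (f x).castSucc, fun x y hxy => ?_, fun x y hxy => ?_⟩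
  · by_cases hx : x = v <;> by_cases hy : y = v <;>
      simp only [hx, hy, if_true, if_false, Fin.castSucc_inj] at hxy
    · exact hx.trans hy.symm
    · exact absurd hxy.symm (Fin.castSucc_ne_last _)
    · exact absurd hxy (Fin.castSucc_ne_last _)
    · exact hf hx hy hxy
  · by_cases hx : x = v
    · subst hx
      simpa [hxy.ne'] using attach_adj_last.2 (hv y hxy)
    by_cases hy : y = v
    · subst hy
      simpa [hxy.ne] using (attach_adj_last.2 (hv x hxy.symm)).symm
    simpa [hx, hy] using attach_adj_castSucc.2 (hG x y hx hy hxy)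

end Attach

section PartialTwoTree

variable {V : Type*} {G : SimpleGraph V}

theorem isTwoTree_top_three : IsTwoTree (⊤ : SimpleGraph (Fin 3)) :=
  ⟨le_rfl, fun _ _ _ _ h => h, fun i hi => absurd i.isLt (by omega)⟩

theorem isPartialTwoTree_of_card_le_three [Finite V] (h : Nat.card V ≤ 3) :
    IsPartialTwoTree G := by
  have := Fintype.ofFinite V
  obtain ⟨f⟩ := Function.Embedding.nonempty_of_card_le (α := V) (β := Fin 3)
    (by rwa [Fintype.card_fin, ← Nat.card_eq_fintype_card])
  exact ⟨3, ⊤, isTwoTree_top_three, f, f.injective, fun a b hab => f.injective.ne hab.ne⟩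

theorem isPartialTwoTree_of_isolated {v : V} (hv : G.neighborSet v = ∅)
    (h : IsPartialTwoTree (G.induce {v}ᶜ)) : IsPartialTwoTree G := by
  classical
  obtain ⟨m, T, hT, e, he, heT⟩ := h
  have hm : 0 < m := by have := hT.1; omega
  obtain ⟨q, hq⟩ := hT.exists_adj ⟨0, hm⟩
  refine isPartialTwoTree_of_attach (v := v) hT hq
    (fun x => if hx : x = v then ⟨0, hm⟩ else e ⟨x, hx⟩)
    (fun x hx y hy hxy => ?_) (fun x y hx hy hxy => ?_) fun x hx => ?_
  · simp only [dif_neg (show x ≠ v from hx), dif_neg (show y ≠ v from hy)] at hxy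
    exact congrArg Subtype.val (he hxy)
  · simp only [dif_neg hx, dif_neg hy]
    exact heT ⟨x, hx⟩ ⟨y, hy⟩ hxy
  · exact absurd (hv ▸ hx : x ∈ (∅ : Set V)) id

theorem isPartialTwoTree_of_collapse {v a b : V} (ha : G.Adj v a) (hb : G.Adj v b)
    (hsub : G.neighborSet v ⊆ {a, b}) (h : IsPartialTwoTree (G.map (collapse {v, a} a))) :
    IsPartialTwoTree G := by
  obtain ⟨m, T, hT, e, he, heT⟩ := h
  have hs : a ∈ ({v, a} : Set V) := by simp
  have hoff : ∀ x y, x ≠ v → y ≠ v → collapse {v, a} a x = collapse {v, a} a y → x = y := by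
    intro x y hx hy hxy
    rcases (collapse_eq_collapse_iff hs).1 hxy with h | ⟨hxS, hyS⟩
    · exact h
    · simp only [Set.mem_insert_iff, Set.mem_singleton_iff, hx, hy, false_or] at hxS hyS
      exact hxS.trans hyS.symm
  have hva : collapse {v, a} a v = collapse {v, a} a a :=
    (collapse_eq_collapse_iff hs).2 (Or.inr ⟨by simp, hs⟩)
  obtain ⟨q, hq, hbq⟩ : ∃ q, T.Adj (e (collapse {v, a} a a)) q ∧
      (e (collapse {v, a} a b) = e (collapse {v, a} a a) ∨ e (collapse {v, a} a b) = q) := by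
    by_cases hba : b = a
    · obtain ⟨q, hq⟩ := hT.exists_adj (e (collapse {v, a} a a))
      exact ⟨q, hq, Or.inl (congrArg (e ∘ collapse {v, a} a) hba)⟩
    refine ⟨_, ?_, Or.inr rfl⟩
    rw [← hva]
    refine heT _ _ (map_adj_apply' hb fun h => ?_)
    exact hba (hoff b a (G.ne_of_adj hb).symm (G.ne_of_adj ha).symm (h.symm.trans hva))
  refine isPartialTwoTree_of_attach (v := v) hT hq (e ∘ collapse {v, a} a)
    (fun x hx y hy hxy => ?_) (fun x y hx hy hxy => ?_) fun x hx => ?_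
  · exact hoff x y hx hy (he hxy)
  · exact heT _ _ (map_adj_apply' hxy fun h => G.ne_of_adj hxy (hoff x y hx hy h))
  · rcases hsub hx with rfl | rfl
    exacts [Or.inl rfl, hbq]

theorem isPartialTwoTree_of_not_isMinor_K4 [Finite V] (h : ¬ IsMinor K₄ G) :
    IsPartialTwoTree G := by
  induction hn : Nat.card V using Nat.strong_induction_on generalizing V with
  | _ n ih =>
    by_cases h3 : Nat.card V ≤ 3
    · exact isPartialTwoTree_of_card_le_three h3
    have : Nonempty V := Finite.card_pos_iff.1 (by omega)
    obtain ⟨v, hv⟩ : ∃ v, (G.neighborSet v).encard < 3 := by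
      by_contra! hall
      exact h (isMinor_K4_of_three_le hall)
    rcases (G.neighborSet v).eq_empty_or_nonempty with hiso | ⟨a, ha⟩
    · refine isPartialTwoTree_of_isolated hiso (ih _ ?_ (fun hK => h (hK.trans ?_)) rfl)
      · exact hn ▸ Finite.card_subtype_lt (x := v) (by simp)
      · exact isMinor_induce _
    · obtain ⟨b, hb, hsub⟩ := exists_subset_pair_of_encard_lt_three ha hv
      refine isPartialTwoTree_of_collapse ha hb hsub (ih _ ?_ (fun hK => h (hK.trans ?_)) rfl)
      · exact hn ▸ card_collapse_lt (t := v) (by simp) (G.ne_of_adj ha)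
      · exact isMinor_map_collapse (by simp) (induce_pair_connected_of_adj ha)

theorem IsPartialTwoTree.not_isMinor_K4 (h : IsPartialTwoTree G) : ¬ IsMinor K₄ G := by
  obtain ⟨_, T, hT, f, hf, hfT⟩ := h
  exact fun hK => hT.not_isMinor_K4 (hK.trans (isMinor_of_injective_hom ⟨f, hfT _ _⟩ hf))

end PartialTwoTree

theorem k4MinorFree_iff_partialTwoTree_general {V : Type*} [Fintype V]
    (G : SimpleGraph V) :
    ¬ IsMinor (⊤ : SimpleGraph (Fin 4)) G ↔ IsPartialTwoTree G :=
  ⟨isPartialTwoTree_of_not_isMinor_K4, IsPartialTwoTree.not_isMinor_K4⟩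

/-- A graph has no `K₄` minor if and only if it is a partial 2-tree. -/
theorem k4MinorFree_iff_partialTwoTree {V : Type*} [Fintype V] [DecidableEq V]
    (G : SimpleGraph V) :
    ¬ IsMinor (⊤ : SimpleGraph (Fin 4)) G ↔ IsPartialTwoTree G :=
  k4MinorFree_iff_partialTwoTree_general G

end TwwPaper
end
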